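/- arXiv:2310.02347 — 2 statements merged into one kernel-verified Lean document; each statement's English description precedes it below -/
import Mathlib

section
/- The inequality δp ≥ θ̄·δB̲·z⁺ + θ̲·δB̄·z⁻ is valid on P₀ ∪ P₁ ∪ P₂, and hence on conv(P₀ ∪ P₁ ∪ P₂). -/
abbrev Pt := ℝ × ℝ × ℝ × ℝ × ℝ

def P0 (tl tu : ℝ) : Set Pt :=
  {p | p.1 = 0 ∧ p.2.1 = 0 ∧ p.2.2.1 = 0 ∧ p.2.2.2.2 = 0 ∧ tl ≤ p.2.2.2.1 ∧ p.2.2.2.1 ≤ tu}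

def P1 (tu bl bu : ℝ) : Set Pt :=
  {p | p.1 = 1 ∧ p.2.1 = 1 ∧ p.2.2.1 = 0 ∧ 0 ≤ p.2.2.2.1 ∧ p.2.2.2.1 ≤ tu ∧
    bl * p.2.2.2.1 ≤ p.2.2.2.2 ∧ p.2.2.2.2 ≤ bu * p.2.2.2.1}

def P2 (tl bl bu : ℝ) : Set Pt :=
  {p | p.1 = 1 ∧ p.2.1 = 0 ∧ p.2.2.1 = 1 ∧ tl ≤ p.2.2.2.1 ∧ p.2.2.2.1 ≤ 0 ∧
    bu * p.2.2.2.1 ≤ p.2.2.2.2 ∧ p.2.2.2.2 ≤ bl * p.2.2.2.1}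

/-!
On `P₀` both sides vanish. On `P₁` we have `δp ≥ δB̲·θ ≥ δB̲·θ̄` because `δB̲ ≤ 0` and
`θ ≤ θ̄`; symmetrically on `P₂`, `δp ≥ δB̄·θ ≥ δB̄·θ̲`. The inequality is linear, so the
half-space it defines is convex and therefore contains the convex hull.
-/

theorem convex_setOf_le_of_isLinearMap {𝕜 E β : Type*} [Semiring 𝕜] [PartialOrder 𝕜]
    [AddCommMonoid E] [AddCommGroup β] [PartialOrder β] [IsOrderedAddMonoid β]
    [Module 𝕜 E] [Module 𝕜 β] [PosSMulMono 𝕜 β] {f g : E → β}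
    (hf : IsLinearMap 𝕜 f) (hg : IsLinearMap 𝕜 g) : Convex 𝕜 {w | f w ≤ g w} := by
  simpa only [LinearMap.sub_apply, IsLinearMap.mk'_apply, sub_nonpos] using
    convex_halfSpace_le (IsLinearMap.mk' f hf - IsLinearMap.mk' g hg).isLinear 0

def cutHalfSpace (tl tu bl bu : ℝ) : Set Pt :=
  {p | tu * bl * p.2.1 + tl * bu * p.2.2.1 ≤ p.2.2.2.2}

theorem convex_cutHalfSpace (tl tu bl bu : ℝ) : Convex ℝ (cutHalfSpace tl tu bl bu) := by
  refine convex_setOf_le_of_isLinearMap ⟨fun p q => ?_, fun c p => ?_⟩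
    ⟨fun p q => rfl, fun c p => rfl⟩
  · simp only [Prod.snd_add, Prod.fst_add]
    ring
  · simp only [Prod.smul_snd, Prod.smul_fst, smul_eq_mul]
    ring

theorem P0_subset_cutHalfSpace (tl tu bl bu : ℝ) : P0 tl tu ⊆ cutHalfSpace tl tu bl bu := by
  rintro p ⟨-, hzp, hzm, hdp, -, -⟩
  simp [cutHalfSpace, hzp, hzm, hdp]

theorem P1_subset_cutHalfSpace (tl tu bu : ℝ) {bl : ℝ} (hbl : bl ≤ 0) :
    P1 tu bl bu ⊆ cutHalfSpace tl tu bl bu := by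
  rintro p ⟨-, hzp, hzm, -, hθ, hlow, -⟩
  simp only [cutHalfSpace, Set.mem_ofPred_eq, hzp, hzm]
  nlinarith

theorem P2_subset_cutHalfSpace (tl tu bl : ℝ) {bu : ℝ} (hbu : 0 ≤ bu) :
    P2 tl bl bu ⊆ cutHalfSpace tl tu bl bu := by
  rintro p ⟨-, hzp, hzm, hθ, -, hlow, -⟩
  simp only [cutHalfSpace, Set.mem_ofPred_eq, hzp, hzm]
  nlinarith

theorem stmt_5_general (tl tu bl bu : ℝ) (h3 : bl < 0) (h4 : 0 < bu) :
    (∀ p ∈ P0 tl tu ∪ P1 tu bl bu ∪ P2 tl bl bu,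
      p.2.2.2.2 ≥ tu * bl * p.2.1 + tl * bu * p.2.2.1) ∧
    (∀ p ∈ convexHull ℝ (P0 tl tu ∪ P1 tu bl bu ∪ P2 tl bl bu),
      p.2.2.2.2 ≥ tu * bl * p.2.1 + tl * bu * p.2.2.1) := by
  have hvalid : P0 tl tu ∪ P1 tu bl bu ∪ P2 tl bl bu ⊆ cutHalfSpace tl tu bl bu :=
    Set.union_subset
      (Set.union_subset (P0_subset_cutHalfSpace tl tu bl bu)
        (P1_subset_cutHalfSpace tl tu bu h3.le))
      (P2_subset_cutHalfSpace tl tu bl h4.le)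
  exact ⟨hvalid, fun p hp => convexHull_min hvalid (convex_cutHalfSpace tl tu bl bu) hp⟩

theorem stmt_5 (tl tu bl bu : ℝ) (h1 : tl < 0) (h2 : 0 < tu) (h3 : bl < 0) (h4 : 0 < bu) :
    (∀ p ∈ P0 tl tu ∪ P1 tu bl bu ∪ P2 tl bl bu,
      p.2.2.2.2 ≥ tu * bl * p.2.1 + tl * bu * p.2.2.1) ∧
    (∀ p ∈ convexHull ℝ (P0 tl tu ∪ P1 tu bl bu ∪ P2 tl bl bu),
      p.2.2.2.2 ≥ tu * bl * p.2.1 + tl * bu * p.2.2.1) :=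
  stmt_5_general tl tu bl bu h3 h4
end

section
/- The inequality θ̲·δB̄·z⁺ + θ̲·δB̲·z⁻ + δB̄·θ − δp ≥ θ̲·δB̄ is valid on P₀ ∪ P₁ ∪ P₂, and hence on conv(P₀ ∪ P₁ ∪ P₂). -/
theorem convexHull_subset_halfSpace_ge {E : Type*} [AddCommGroup E] [Module ℝ E] {f : E → ℝ}
    (hf : IsLinearMap ℝ f) {s : Set E} {r : ℝ} (hs : ∀ p ∈ s, r ≤ f p) :
    ∀ p ∈ convexHull ℝ s, r ≤ f p :=
  fun _ hp => convexHull_min hs (convex_halfSpace_ge hf r) hp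

def cutForm (tl bl bu : ℝ) (p : Pt) : ℝ :=
  tl * bu * p.2.1 + tl * bl * p.2.2.1 + bu * p.2.2.2.1 - p.2.2.2.2

theorem isLinearMap_cutForm (tl bl bu : ℝ) : IsLinearMap ℝ (cutForm tl bl bu) where
  map_add p q := by simp only [cutForm, Prod.fst_add, Prod.snd_add]; ring
  map_smul c p := by simp only [cutForm, Prod.smul_fst, Prod.smul_snd, smul_eq_mul]; ring

section Pieces

variable {tl tu bl bu : ℝ} {p : Pt}

theorem le_cutForm_of_mem_P0 (hbu : 0 ≤ bu) (hp : p ∈ P0 tl tu) :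
    tl * bu ≤ cutForm tl bl bu p := by
  obtain ⟨-, hzp, hzm, hδp, hθ, -⟩ := hp
  simp only [cutForm, hzp, hzm, hδp]
  linarith [mul_le_mul_of_nonneg_left hθ hbu]

theorem le_cutForm_of_mem_P1 (hp : p ∈ P1 tu bl bu) : tl * bu ≤ cutForm tl bl bu p := by
  obtain ⟨-, hzp, hzm, -, -, -, hδp⟩ := hp
  simp only [cutForm, hzp, hzm]
  linarith

theorem le_cutForm_of_mem_P2 (hb : bl ≤ bu) (hp : p ∈ P2 tl bl bu) :
    tl * bu ≤ cutForm tl bl bu p := by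
  obtain ⟨-, hzp, hzm, hθ, -, -, hδp⟩ := hp
  have hprod : 0 ≤ (bu - bl) * (p.2.2.2.1 - tl) := mul_nonneg (by linarith) (by linarith)
  simp only [cutForm, hzp, hzm]
  linarith

end Pieces

theorem stmt_9_general (tl tu bl bu : ℝ) (h3 : bl < 0) (h4 : 0 < bu) :
    (∀ p ∈ P0 tl tu ∪ P1 tu bl bu ∪ P2 tl bl bu,
      tl * bu * p.2.1 + tl * bl * p.2.2.1 + bu * p.2.2.2.1 - p.2.2.2.2 ≥ tl * bu) ∧
    (∀ p ∈ convexHull ℝ (P0 tl tu ∪ P1 tu bl bu ∪ P2 tl bl bu),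
      tl * bu * p.2.1 + tl * bl * p.2.2.1 + bu * p.2.2.2.1 - p.2.2.2.2 ≥ tl * bu) := by
  have valid : ∀ p ∈ P0 tl tu ∪ P1 tu bl bu ∪ P2 tl bl bu, tl * bu ≤ cutForm tl bl bu p := by
    rintro p ((hp | hp) | hp)
    · exact le_cutForm_of_mem_P0 h4.le hp
    · exact le_cutForm_of_mem_P1 hp
    · exact le_cutForm_of_mem_P2 (h3.trans h4).le hp
  exact ⟨valid, convexHull_subset_halfSpace_ge (isLinearMap_cutForm tl bl bu) valid⟩

theorem stmt_9 (tl tu bl bu : ℝ) (h1 : tl < 0) (h2 : 0 < tu) (h3 : bl < 0) (h4 : 0 < bu) :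
    (∀ p ∈ P0 tl tu ∪ P1 tu bl bu ∪ P2 tl bl bu,
      tl * bu * p.2.1 + tl * bl * p.2.2.1 + bu * p.2.2.2.1 - p.2.2.2.2 ≥ tl * bu) ∧
    (∀ p ∈ convexHull ℝ (P0 tl tu ∪ P1 tu bl bu ∪ P2 tl bl bu),
      tl * bu * p.2.1 + tl * bl * p.2.2.1 + bu * p.2.2.2.1 - p.2.2.2.2 ≥ tl * bu) :=
  stmt_9_general tl tu bl bu h3 h4
end
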